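/- arXiv:1409.3113 — 9 statements merged into one kernel-verified Lean document; each statement's English description precedes it below -/
import Mathlib

section
/- For all natural numbers n ≥ 1 and k with 1 ≤ k ≤ n, the sum over all k-tuples (n_1,...,n_k) of positive integers with n_1 + ... + n_k = n of the quantity (n! / (n_1! ⋯ n_k! · k!)) · ∏_{ℓ=1}^k (n_ℓ/n)^{n_ℓ - 1} equals the binomial coefficient C(n-1, k-1). -/
/-!
Write `A_0 = 1` and `A_m(x) = x (x + m)^(m-1)` for the Abel polynomials. Substituting `f = g + 1`
and using `(g + 1)^g / (g + 1)! = A_g(1) / g!`, the sum becomes `n! / (k! n^(n-k))` times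
`∑_{g_1 + ⋯ + g_k = n - k} ∏ A_{g_i}(1) / g_i!`. The Abel polynomials are of binomial type,
`A_n(x + y) = ∑ C(n, i) A_i(x) A_{n-i}(y)`, so this sum equals `A_{n-k}(k) / (n-k)!`,
that is `k n^(n-k-1) / (n-k)!`, and the product is `C(n-1, k-1)`.
Binomial type is proved by induction on `n`: as `A_n'(x) = n A_{n-1}(x + 1)`, both sides have
`x`-derivative `n A_{n-1}(x + y + 1)`, and they agree at `x = 0`.
-/

open Finset Polynomial

lemma sum_filter_one_le_antidiagonalTuple {M : Type*} [AddCommMonoid M] (k m : ℕ)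
    (F : (Fin k → ℕ) → M) :
    ∑ f ∈ (Finset.Nat.antidiagonalTuple k (k + m)).filter (fun f => ∀ i, 1 ≤ f i), F f =
      ∑ g ∈ Finset.Nat.antidiagonalTuple k m, F (g + 1) := by
  symm
  refine sum_nbij' (· + 1) (· - 1) ?_ ?_ ?_ ?_ (fun _ _ => rfl)
  · intro g hg
    simp only [mem_filter, Finset.Nat.mem_antidiagonalTuple] at hg ⊢
    simp [sum_add_distrib, hg, add_comm]
  · intro f hf
    obtain ⟨hsum, hpos⟩ := mem_filter.mp hf
    rw [Finset.Nat.mem_antidiagonalTuple] at hsum ⊢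
    have h : ∑ i, (f i - 1 + 1) = k + m := by
      rw [← hsum]
      exact sum_congr rfl fun i _ => Nat.sub_add_cancel (hpos i)
    rw [sum_add_distrib, sum_const, card_univ, Fintype.card_fin, smul_eq_mul, mul_one] at h
    simp only [Pi.sub_apply, Pi.one_apply]
    omega
  · intro g _
    ext i
    simp
  · intro f hf
    simp only [mem_filter] at hf
    ext i
    simp [Nat.sub_add_cancel (hf.2 i)]

section AbelPolynomial

variable {R : Type*} [CommRing R]

noncomputable def abelPoly : ℕ → R[X]
  | 0 => 1
  | m + 1 => X * (X + ((m : R[X]) + 1)) ^ m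

@[simp] lemma abelPoly_zero : (abelPoly 0 : R[X]) = 1 := rfl

lemma abelPoly_succ (m : ℕ) : (abelPoly (m + 1) : R[X]) = X * (X + ((m : R[X]) + 1)) ^ m := rfl

lemma eval_abelPoly_succ (x : R) (m : ℕ) :
    (abelPoly (m + 1)).eval x = x * (x + m + 1) ^ m := by
  simp [abelPoly_succ, add_assoc]

lemma derivative_abelPoly_succ (m : ℕ) :
    derivative (abelPoly (m + 1) : R[X]) = ((m : R[X]) + 1) * (abelPoly m).comp (X + 1) := by
  cases m with
  | zero => simp [abelPoly_succ]
  | succ m =>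
    simp only [abelPoly_succ, derivative_mul, derivative_X, derivative_pow, derivative_add,
      derivative_natCast, derivative_one, X_comp, mul_comp, pow_comp, add_comp, natCast_comp,
      one_comp, map_natCast, Nat.add_sub_cancel]
    push_cast
    ring

lemma abelPoly_comp_X_add_C [IsAddTorsionFree R] (n : ℕ) (y : R) :
    (abelPoly n).comp (X + C y) =
      ∑ p ∈ antidiagonal n,
        (n.choose p.1 : R[X]) * abelPoly p.1 * C ((abelPoly p.2).eval y) := by
  induction n with
  | zero => simp
  | succ m ih =>
    set D := (abelPoly (m + 1)).comp (X + C y) -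
      ∑ p ∈ antidiagonal (m + 1), ((m + 1).choose p.1 : R[X]) * abelPoly p.1 *
        C ((abelPoly p.2).eval y)
    have hL : derivative ((abelPoly (m + 1)).comp (X + C y)) =
        ((m : R[X]) + 1) * ((abelPoly m).comp (X + C y)).comp (X + 1) := by
      rw [derivative_comp, derivative_X_add_C, one_mul, derivative_abelPoly_succ, mul_comp,
        comp_assoc, comp_assoc]
      simp only [add_comp, natCast_comp, one_comp, X_comp, C_comp]
      ring_nf
    have hR : derivative (∑ p ∈ antidiagonal (m + 1), ((m + 1).choose p.1 : R[X]) *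
        abelPoly p.1 * C ((abelPoly p.2).eval y)) = ((m : R[X]) + 1) *
        ∑ p ∈ antidiagonal m, (m.choose p.1 : R[X]) * (abelPoly p.1).comp (X + 1) *
          C ((abelPoly p.2).eval y) := by
      rw [derivative_sum, Nat.sum_antidiagonal_succ, mul_sum]
      simp only [abelPoly_zero, derivative_mul, derivative_natCast, derivative_one,
        derivative_C, derivative_abelPoly_succ, zero_mul, mul_zero, add_zero, zero_add]
      refine sum_congr rfl fun p _ => ?_
      have h := congrArg (Nat.cast : ℕ → R[X]) (Nat.add_one_mul_choose_eq m p.1)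
      push_cast at h
      linear_combination -(C ((abelPoly p.2).eval y) * (abelPoly p.1).comp (X + 1)) * h
    have hD : derivative D = 0 := by
      rw [derivative_sub, hL, hR, ih]
      simp only [Polynomial.sum_comp, mul_comp, natCast_comp, C_comp, sub_self]
    have hD0 : D.coeff 0 = 0 := by
      simp [D, coeff_zero_eq_eval_zero, eval_finsetSum, Nat.sum_antidiagonal_succ,
        eval_abelPoly_succ]
    have hD' : D = 0 := by rw [eq_C_of_derivative_eq_zero hD, hD0, C_0]
    exact sub_eq_zero.mp hD'

end AbelPolynomial

section Field

variable {K : Type*} [Field K] [CharZero K]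

lemma sum_antidiagonal_eval_abelPoly_div_factorial (x y : K) (n : ℕ) :
    ∑ p ∈ antidiagonal n, (abelPoly p.1).eval x / p.1.factorial *
      ((abelPoly p.2).eval y / p.2.factorial) = (abelPoly n).eval (x + y) / n.factorial := by
  have hxy := congrArg (eval x) (abelPoly_comp_X_add_C n y)
  simp only [eval_comp, eval_add, eval_X, eval_C, eval_finsetSum, eval_mul, eval_natCast] at hxy
  rw [hxy, sum_div]
  refine sum_congr rfl fun p hp => ?_
  obtain rfl := mem_antidiagonal.mp hp
  have h := congrArg (Nat.cast : ℕ → K) (Nat.add_choose_mul_factorial_mul_factorial p.1 p.2)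
  push_cast at h
  have hc : ((p.1 + p.2).choose p.2 : K) ≠ 0 := by exact_mod_cast (Nat.choose_pos (by omega)).ne'
  rw [Nat.choose_symm_add, ← h]
  field_simp

lemma sum_piAntidiag_prod_eval_abelPoly_div_factorial {ι : Type*} [DecidableEq ι]
    (s : Finset ι) (x : ι → K) (n : ℕ) :
    ∑ f ∈ piAntidiag s n, ∏ i ∈ s, (abelPoly (f i)).eval (x i) / (f i).factorial =
      (abelPoly n).eval (∑ i ∈ s, x i) / n.factorial := by
  induction s using Finset.cons_induction generalizing n with
  | empty => cases n <;> simp [eval_abelPoly_succ]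
  | cons a s has ih =>
    rw [piAntidiag_cons, sum_disjiUnion, sum_cons, ← sum_antidiagonal_eval_abelPoly_div_factorial]
    refine sum_congr rfl fun p _ => ?_
    rw [← ih, mul_sum, sum_map]
    refine sum_congr rfl fun f hf => ?_
    have hfa : f a = 0 := by
      by_contra h
      exact has ((mem_piAntidiag.mp hf).2 a h)
    rw [prod_cons]
    simp only [addRightEmbedding_apply, Pi.add_apply, hfa, if_true, zero_add]
    congr 1
    refine prod_congr rfl fun i hi => ?_
    rw [if_neg (ne_of_mem_of_not_mem hi has), add_zero]

lemma eval_one_abelPoly_div_factorial (m : ℕ) :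
    (abelPoly m).eval (1 : K) / m.factorial = ((m : K) + 1) ^ m / (m + 1).factorial := by
  cases m with
  | zero => simp
  | succ m =>
    rw [eval_abelPoly_succ, Nat.factorial_succ (m + 1), pow_succ]
    have hm : (m : K) + 1 + 1 ≠ 0 := by exact_mod_cast Nat.succ_ne_zero (m + 1)
    push_cast
    field_simp
    ring

lemma factorial_div_mul_eval_abelPoly_div_factorial (k m : ℕ) :
    ((k + 1 + m).factorial : K) / ((k + 1).factorial * ((k + 1 + m : ℕ) : K) ^ m) *
      ((abelPoly m).eval ((k + 1 : ℕ) : K) / m.factorial) = (k + m).choose k := by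
  cases m with
  | zero => simp [Nat.factorial_ne_zero]
  | succ m =>
    have h := congrArg (Nat.cast : ℕ → K) (Nat.add_choose_mul_factorial_mul_factorial k (m + 1))
    rw [← Nat.choose_symm_add] at h
    rw [eval_abelPoly_succ, add_right_comm k 1, Nat.factorial_succ (k + (m + 1)),
      Nat.factorial_succ k]
    have hkm : ((k + (m + 1) : ℕ) : K) + 1 ≠ 0 := by
      exact_mod_cast Nat.succ_ne_zero (k + (m + 1))
    have hk : (k.factorial : K) ≠ 0 := Nat.cast_ne_zero.mpr k.factorial_ne_zero
    have hm : ((m + 1).factorial : K) ≠ 0 := Nat.cast_ne_zero.mpr (m + 1).factorial_ne_zero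
    push_cast at h hkm ⊢
    rw [← h]
    field_simp
    ring

lemma sum_antidiagonalTuple_prod_eval_abelPoly_div_factorial (k m : ℕ) (x : K) :
    ∑ g ∈ Finset.Nat.antidiagonalTuple k m, ∏ i, (abelPoly (g i)).eval x / (g i).factorial =
      (abelPoly m).eval (k * x) / m.factorial := by
  rw [← piAntidiag_univ_fin_eq_antidiagonalTuple, sum_piAntidiag_prod_eval_abelPoly_div_factorial,
    sum_const, card_univ, Fintype.card_fin, nsmul_eq_mul]

lemma div_mul_prod_div_pow_eq_div_mul_prod_eval_abelPoly (a c : K) {k m : ℕ} (g : Fin k → ℕ)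
    (hg : ∑ i, g i = m) :
    a / ((∏ i, (((g + 1) i).factorial : K)) * k.factorial) *
        ∏ i, (((g + 1) i : K) / c) ^ ((g + 1) i - 1) =
      a / (k.factorial * c ^ m) * ∏ i, (abelPoly (g i)).eval (1 : K) / (g i).factorial := by
  simp only [Pi.add_apply, Pi.one_apply, Nat.add_sub_cancel, eval_one_abelPoly_div_factorial,
    prod_div_distrib, div_pow, prod_pow_eq_pow_sum, hg]
  push_cast
  ring

end Field

theorem stmt0_general (n k : ℕ) (hk1 : 1 ≤ k) (hkn : k ≤ n) :
    ∑ f ∈ (Finset.Nat.antidiagonalTuple k n).filter (fun f => ∀ i, 1 ≤ f i),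
      (n.factorial : ℚ) / ((∏ i, ((f i).factorial : ℚ)) * k.factorial) *
        ∏ i, ((f i : ℚ) / n) ^ (f i - 1)
    = Nat.choose (n - 1) (k - 1) := by
  obtain ⟨k, rfl⟩ := Nat.exists_eq_add_of_le' hk1
  obtain ⟨m, rfl⟩ := Nat.exists_eq_add_of_le hkn
  rw [sum_filter_one_le_antidiagonalTuple,
    sum_congr rfl fun g hg => div_mul_prod_div_pow_eq_div_mul_prod_eval_abelPoly _ _ g
      (Finset.Nat.mem_antidiagonalTuple.mp hg),
    ← mul_sum, sum_antidiagonalTuple_prod_eval_abelPoly_div_factorial, mul_one,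
    factorial_div_mul_eval_abelPoly_div_factorial]
  simp

theorem stmt0 (n k : ℕ) (hn : 1 ≤ n) (hk1 : 1 ≤ k) (hkn : k ≤ n) :
    ∑ f ∈ (Finset.Nat.antidiagonalTuple k n).filter (fun f => ∀ i, 1 ≤ f i),
      (n.factorial : ℚ) / ((∏ i, ((f i).factorial : ℚ)) * k.factorial) *
        ∏ i, ((f i : ℚ) / n) ^ (f i - 1)
    = Nat.choose (n - 1) (k - 1) :=
  stmt0_general n k hk1 hkn
end

section
/- For natural numbers n and k with 1 ≤ k ≤ n+1, the Abel-type sum ∑_{m=0}^{n+1-k} C(n+1-k, m) · (m+1)^{m-1} · (n-m)^{n-m-k} equals k·(n+1)^{n-k}/(k-1), provided k ≥ 2. Equivalently, (k-1) · ∑_{m=0}^{n+1-k} C(n+1-k, m) · (m+1)^{m-1} · (n-m)^{n-m-k} = k·(n+1)^{n-k}. -/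
/-!
Write `w x i = x (x + i)^(i - 1)` (a polynomial, with `w x 0 = 1`). Abel's identity
`∑ C(n,i) w x i (y + j)^j = (x + y + n)^n` (over `i + j = n`) is proved by induction on `n`,
together with the fact that `F n x y = ∑ C(n,i) (x + i)^i (y + j)^j` depends only on `x + y`:
Pascal's rule and `x + y + n + 1 = (x + i) + (y + j + 1)` express both sums at `n + 1` through
sums at `n`. Splitting `x + y + n = (x + i) + (y + j)` once more gives the symmetric form
`(x + y + n) ∑ C(n,i) w x i w y j = (x + y) (x + y + n)^n`, whose case `x = 1`, `y = k - 1`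
is the theorem.
-/

open Finset Finset.Nat

section CommRing

variable {R : Type*} [CommRing R]

def abelWeight (x : R) : ℕ → R
  | 0 => 1
  | i + 1 => x * (x + ↑(i + 1)) ^ i

def abelSum (n : ℕ) (x y : R) : R :=
  ∑ p ∈ antidiagonal n, (n.choose p.1 : R) * abelWeight x p.1 * (y + p.2) ^ p.2

def abelPowSum (n : ℕ) (x y : R) : R :=
  ∑ p ∈ antidiagonal n, (n.choose p.1 : R) * (x + p.1) ^ p.1 * (y + p.2) ^ p.2

@[simp]
theorem abelWeight_zero (x : R) : abelWeight x 0 = 1 := rfl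

theorem abelWeight_succ (x : R) (i : ℕ) : abelWeight x (i + 1) = x * (x + ↑(i + 1)) ^ i := rfl

theorem add_mul_abelWeight (x : R) (i : ℕ) : (x + i) * abelWeight x i = x * (x + i) ^ i := by
  cases i with
  | zero => simp
  | succ i => rw [abelWeight_succ, pow_succ]; ring

theorem abelPowSum_succ (n : ℕ) (x y : R) :
    abelPowSum (n + 1) x y = abelSum (n + 1) x y + (n + 1) * abelPowSum n (x + 1) y := by
  rw [abelPowSum, abelSum, abelPowSum, sum_antidiagonal_succ, sum_antidiagonal_succ, mul_sum,
    add_assoc, ← sum_add_distrib]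
  congr 1
  · simp
  refine sum_congr rfl fun p _ => ?_
  have hchoose : ((n + 1 : ℕ) : R) * n.choose p.1 = (n + 1).choose (p.1 + 1) * ↑(p.1 + 1) := by
    exact_mod_cast congrArg (Nat.cast : ℕ → R) (Nat.add_one_mul_choose_eq n p.1)
  rw [abelWeight_succ]
  push_cast at hchoose ⊢
  linear_combination -(x + 1 + p.1) ^ p.1 * (y + p.2) ^ p.2 * hchoose

theorem abelSum_succ (n : ℕ) (x y : R) :
    abelSum (n + 1) x y = (x + y + (n + 1)) * abelSum n x (y + 1) +
      x * (abelPowSum n (x + 1) y - abelPowSum n x (y + 1)) := by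
  have hpascal := sum_antidiagonal_choose_succ_mul (fun i j => abelWeight x i * (y + j) ^ j) n
  simp only [← mul_assoc] at hpascal
  have hshift : ∑ p ∈ antidiagonal n,
        (n.choose p.1 : R) * abelWeight x p.1 * (y + ↑(p.2 + 1)) ^ (p.2 + 1)
      = (x + y + (n + 1)) * abelSum n x (y + 1) - x * abelPowSum n x (y + 1) := by
    rw [abelSum, abelPowSum, mul_sum, mul_sum, ← sum_sub_distrib]
    refine sum_congr rfl fun p hp => ?_
    have hn : (p.1 : R) + p.2 = n := by
      exact_mod_cast congrArg (Nat.cast : ℕ → R) (mem_antidiagonal.mp hp)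
    push_cast
    linear_combination (n.choose p.1 : R) * abelWeight x p.1 * (y + 1 + p.2) ^ p.2 * hn
      - (n.choose p.1 : R) * (y + 1 + p.2) ^ p.2 * add_mul_abelWeight x p.1
  have hpeel : ∑ p ∈ antidiagonal n,
        (n.choose p.2 : R) * abelWeight x (p.1 + 1) * (y + p.2) ^ p.2
      = x * abelPowSum n (x + 1) y := by
    rw [abelPowSum, mul_sum]
    refine sum_congr rfl fun p hp => ?_
    rw [abelWeight_succ, ← Nat.choose_symm_of_eq_add (mem_antidiagonal.mp hp).symm]
    push_cast
    ring
  rw [abelSum, hpascal, hshift, hpeel]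
  ring

theorem abelSum_eq_pow_and_abelPowSum_shift (n : ℕ) : ∀ x y : R,
    abelSum n x y = (x + y + n) ^ n ∧ abelPowSum n (x + 1) y = abelPowSum n x (y + 1) := by
  induction n with
  | zero => simp [abelSum, abelPowSum]
  | succ n ih =>
    have hclosed : ∀ x y : R, abelSum (n + 1) x y = (x + y + ↑(n + 1)) ^ (n + 1) := by
      intro x y
      rw [abelSum_succ, (ih x (y + 1)).1, (ih x y).2, sub_self]
      push_cast
      ring
    refine fun x y => ⟨hclosed x y, ?_⟩
    rw [abelPowSum_succ, abelPowSum_succ, hclosed, hclosed, (ih (x + 1) y).2]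
    ring_nf

theorem abelSum_eq_pow (n : ℕ) (x y : R) : abelSum n x y = (x + y + n) ^ n :=
  (abelSum_eq_pow_and_abelPowSum_shift n x y).1

theorem mul_sum_abelWeight_mul_abelWeight (n : ℕ) (x y : R) :
    (x + y + n) * ∑ p ∈ antidiagonal n, (n.choose p.1 : R) * abelWeight x p.1 * abelWeight y p.2
      = (x + y) * (x + y + n) ^ n := by
  have hswap : abelSum n y x
      = ∑ p ∈ antidiagonal n, (n.choose p.1 : R) * (x + p.1) ^ p.1 * abelWeight y p.2 := by
    rw [abelSum, ← sum_antidiagonal_swap]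
    refine sum_congr rfl fun p hp => ?_
    rw [Prod.fst_swap, Prod.snd_swap, ← Nat.choose_symm_of_eq_add (mem_antidiagonal.mp hp).symm]
    ring
  have hsplit : (x + y + n) * ∑ p ∈ antidiagonal n,
        (n.choose p.1 : R) * abelWeight x p.1 * abelWeight y p.2
      = x * abelSum n y x + y * abelSum n x y := by
    rw [hswap, abelSum, mul_sum, mul_sum, mul_sum, ← sum_add_distrib]
    refine sum_congr rfl fun p hp => ?_
    have hn : (p.1 : R) + p.2 = n := by
      exact_mod_cast congrArg (Nat.cast : ℕ → R) (mem_antidiagonal.mp hp)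
    linear_combination (n.choose p.1 : R) * (abelWeight y p.2 * add_mul_abelWeight x p.1
      + abelWeight x p.1 * add_mul_abelWeight y p.2 - abelWeight x p.1 * abelWeight y p.2 * hn)
  rw [hsplit, abelSum_eq_pow, abelSum_eq_pow]
  ring

end CommRing

section Field

variable {K : Type*} [Field K]

theorem abelWeight_eq_mul_zpow {x : K} (hx : x ≠ 0) (i : ℕ) :
    abelWeight x i = x * (x + i) ^ ((i : ℤ) - 1) := by
  cases i with
  | zero => simp [hx]
  | succ i => simp only [abelWeight_succ, Nat.cast_succ, add_sub_cancel_right, zpow_natCast]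

theorem abel_identity_zpow {x y : K} (hx : x ≠ 0) (hy : y ≠ 0) (n : ℕ)
    (hxyn : x + y + n ≠ 0) :
    x * y * ∑ p ∈ antidiagonal n,
        (n.choose p.1 : K) * (x + p.1) ^ ((p.1 : ℤ) - 1) * (y + p.2) ^ ((p.2 : ℤ) - 1)
      = (x + y) * (x + y + n) ^ ((n : ℤ) - 1) := by
  have hweights : x * y * ∑ p ∈ antidiagonal n,
        (n.choose p.1 : K) * (x + p.1) ^ ((p.1 : ℤ) - 1) * (y + p.2) ^ ((p.2 : ℤ) - 1)
      = ∑ p ∈ antidiagonal n, (n.choose p.1 : K) * abelWeight x p.1 * abelWeight y p.2 := by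
    rw [mul_sum]
    refine sum_congr rfl fun p _ => ?_
    rw [abelWeight_eq_mul_zpow hx, abelWeight_eq_mul_zpow hy]
    ring
  apply mul_left_cancel₀ hxyn
  rw [hweights, mul_sum_abelWeight_mul_abelWeight, zpow_sub_one₀ hxyn, zpow_natCast]
  field_simp

end Field

theorem stmt1 (n k : ℕ) (hk2 : 2 ≤ k) (hkn : k ≤ n + 1) :
    ((k : ℚ) - 1) * ∑ m ∈ Finset.range (n + 2 - k),
      (Nat.choose (n + 1 - k) m : ℚ) * ((m : ℚ) + 1) ^ ((m : ℤ) - 1) *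
        ((n : ℚ) - m) ^ ((n : ℤ) - m - k)
    = k * ((n : ℚ) + 1) ^ ((n : ℤ) - k) := by
  obtain ⟨N, hN⟩ : ∃ N, n + 1 = N + k := ⟨n + 1 - k, by omega⟩
  have hnq : (n : ℚ) = N + k - 1 := by
    linear_combination (mod_cast hN : (n : ℚ) + 1 = N + k)
  have hsum : ∑ m ∈ range (n + 2 - k), (Nat.choose (n + 1 - k) m : ℚ) *
        ((m : ℚ) + 1) ^ ((m : ℤ) - 1) * ((n : ℚ) - m) ^ ((n : ℤ) - m - k)
      = ∑ p ∈ antidiagonal N, (N.choose p.1 : ℚ) *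
        (1 + p.1) ^ ((p.1 : ℤ) - 1) * ((k - 1) + p.2) ^ ((p.2 : ℤ) - 1) := by
    rw [sum_antidiagonal_eq_sum_range_succ fun i j => (N.choose i : ℚ) *
        (1 + i) ^ ((i : ℤ) - 1) * ((k - 1) + j) ^ ((j : ℤ) - 1),
      show n + 2 - k = N + 1 by omega, show n + 1 - k = N by omega]
    refine sum_congr rfl fun m hm => ?_
    have hmN : m ≤ N := Nat.lt_succ_iff.mp (mem_range.mp hm)
    rw [show (n : ℤ) - m - k = ((N - m : ℕ) : ℤ) - 1 by omega, hnq]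
    push_cast [Nat.cast_sub hmN]
    ring_nf
  have hk : (k : ℚ) - 1 ≠ 0 := by
    have : (2 : ℚ) ≤ k := mod_cast hk2
    linarith
  have hbase : 1 + ((k : ℚ) - 1) + N = n + 1 := by rw [hnq]; ring
  have habel := abel_identity_zpow one_ne_zero hk N (by rw [hbase]; positivity)
  rw [hbase, show (N : ℤ) - 1 = n - k by omega] at habel
  rw [hsum]
  linear_combination habel
end

section
/- For natural numbers n ≥ 1, m with 1 ≤ m ≤ n, and k with 2 ≤ k ≤ n+1-m, the identity C(n+1, m) · C(n-m, k-2) / C(n-(k-1), m-1) = C(n, k-1) · (n+1)·(k-1) / (m·(n+1-m)) holds as an identity of rational numbers. -/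
theorem stmt2 (n m k : ℕ) (hm1 : 1 ≤ m) (hmn : m ≤ n) (hk2 : 2 ≤ k) (hk : k ≤ n + 1 - m) :
    (Nat.choose (n + 1) m : ℚ) * (Nat.choose (n - m) (k - 2)) /
        (Nat.choose (n - (k - 1)) (m - 1))
    = (Nat.choose n (k - 1) : ℚ) * (((n : ℚ) + 1) * ((k : ℚ) - 1)) /
        ((m : ℚ) * ((n : ℚ) + 1 - m)) := by
  obtain ⟨M, rfl⟩ : ∃ M, m = M + 1 := ⟨m - 1, by omega⟩
  obtain ⟨K, rfl⟩ : ∃ K, k = K + 2 := ⟨k - 2, by omega⟩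
  obtain ⟨r, rfl⟩ : ∃ r, n = M + K + r + 2 := ⟨n - M - K - 2, by omega⟩
  have h1 : M + K + r + 2 - (M + 1) = K + r + 1 := by omega
  have h2 : K + 2 - 2 = K := by omega
  have h3 : M + K + r + 2 - (K + 2 - 1) = M + r + 1 := by omega
  have h4 : M + 1 - 1 = M := by omega
  have h5 : K + 2 - 1 = K + 1 := by omega
  rw [h1, h2, h3, h4, h5]
  rw [Nat.cast_choose ℚ (by omega : M + 1 ≤ M + K + r + 2 + 1),
      Nat.cast_choose ℚ (by omega : K ≤ K + r + 1),
      Nat.cast_choose ℚ (by omega : M ≤ M + r + 1),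
      Nat.cast_choose ℚ (by omega : K + 1 ≤ M + K + r + 2)]
  have e1 : M + K + r + 2 + 1 - (M + 1) = K + r + 2 := by omega
  have e2 : K + r + 1 - K = r + 1 := by omega
  have e3 : M + r + 1 - M = r + 1 := by omega
  have e4 : M + K + r + 2 - (K + 1) = M + r + 1 := by omega
  rw [e1, e2, e3, e4]
  have g1 : ((M + K + r + 2 + 1).factorial : ℚ)
      = ((M : ℚ) + K + r + 3) * (M + K + r + 2).factorial := by
    rw [show M + K + r + 2 + 1 = (M + K + r + 2) + 1 from rfl, Nat.factorial_succ]
    push_cast; ring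
  have g2 : (((M + 1)).factorial : ℚ) = ((M : ℚ) + 1) * M.factorial := by
    rw [Nat.factorial_succ]; push_cast; ring
  have g3 : ((K + r + 2).factorial : ℚ) = ((K : ℚ) + r + 2) * (K + r + 1).factorial := by
    rw [show K + r + 2 = (K + r + 1) + 1 from rfl, Nat.factorial_succ]; push_cast; ring
  have g4 : ((K + 1).factorial : ℚ) = ((K : ℚ) + 1) * K.factorial := by
    rw [Nat.factorial_succ]; push_cast; ring
  rw [g1, g2, g3, g4]
  set A : ℚ := ((M + K + r + 2).factorial : ℚ) with hA
  set B : ℚ := (M.factorial : ℚ) with hB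
  set C : ℚ := (K.factorial : ℚ) with hC
  set D : ℚ := ((r + 1).factorial : ℚ) with hD
  set E : ℚ := ((K + r + 1).factorial : ℚ) with hE
  set G : ℚ := ((M + r + 1).factorial : ℚ) with hG
  have hA0 : A ≠ 0 := by rw [hA]; exact_mod_cast (Nat.factorial_ne_zero _)
  have hB0 : B ≠ 0 := by rw [hB]; exact_mod_cast (Nat.factorial_ne_zero _)
  have hC0 : C ≠ 0 := by rw [hC]; exact_mod_cast (Nat.factorial_ne_zero _)
  have hD0 : D ≠ 0 := by rw [hD]; exact_mod_cast (Nat.factorial_ne_zero _)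
  have hE0 : E ≠ 0 := by rw [hE]; exact_mod_cast (Nat.factorial_ne_zero _)
  have hG0 : G ≠ 0 := by rw [hG]; exact_mod_cast (Nat.factorial_ne_zero _)
  have hM : ((M : ℚ) + 1) ≠ 0 := by positivity
  have hKr : ((K : ℚ) + (r : ℚ) + 2) ≠ 0 := by positivity
  have hK1 : ((K : ℚ) + 1) ≠ 0 := by positivity
  have hMKr : ((M : ℚ) + K + r + 3) ≠ 0 := by positivity
  push_cast
  rw [div_eq_div_iff (div_ne_zero hG0 (mul_ne_zero hB0 hD0))
    (by rw [show ((M : ℚ) + ↑K + ↑r + 2 + 1 - (↑M + 1)) = (K : ℚ) + ↑r + 2 by ring]; positivity)]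
  field_simp
  ring
end

section
/- Let λ ∈ (0,1], θ > 0, and n ≥ 1. Then ∑_{m=1}^n (θ^m/m!)·e^{-θ} · (m·(λn)^{n-m}/(n·(n-m)!))·e^{-λn} = θ(θ+λn)^{n-1}/n! · e^{-(θ+λn)}. -/
/-!
Write `x = λn`. Since `m / (n · m! (n - m)!) = C(n-1, m-1) / n!`, the summand without its
exponential factors is `θ / n! · C(n-1, m-1) θ^(m-1) x^(n-m)`, so the binomial theorem sums
them to `θ (θ + x)^(n-1) / n!`, and the exponentials `e^{-θ} e^{-x}` combine to `e^{-(θ+x)}`.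
-/

open Finset

variable {K : Type*} [Field K] [CharZero K]

lemma pow_div_factorial_mul_borelTanner_eq (θ x : K) {i s : ℕ} (hi : i ≤ s) :
    θ ^ (i + 1) / (i + 1).factorial *
        (((i + 1 : ℕ) : K) * x ^ (s - i) / (((s + 1 : ℕ) : K) * (s - i).factorial))
      = θ * (θ ^ i * x ^ (s - i) * s.choose i) / (s + 1).factorial := by
  have := s.factorial_ne_zero
  have := (s - i).factorial_ne_zero
  rw [Nat.cast_choose K hi]
  push_cast [Nat.factorial_succ]
  field_simp
  ring

lemma sum_Icc_pow_div_factorial_mul_borelTanner (θ x : K) (s : ℕ) :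
    ∑ m ∈ Icc 1 (s + 1), θ ^ m / m.factorial *
        ((m : K) * x ^ (s + 1 - m) / (((s + 1 : ℕ) : K) * (s + 1 - m).factorial))
      = θ * (θ + x) ^ s / (s + 1).factorial := by
  rw [← Ico_add_one_right_eq_Icc, sum_Ico_eq_sum_range, Nat.add_sub_cancel, add_pow, mul_sum,
    sum_div]
  refine sum_congr rfl fun i hi => ?_
  rw [add_comm 1 i, show s + 1 - (i + 1) = s - i by omega]
  exact pow_div_factorial_mul_borelTanner_eq θ x (Nat.lt_succ_iff.mp (mem_range.mp hi))

theorem stmt5_general (lam θ : ℝ) (n : ℕ) (hn : 1 ≤ n) :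
    ∑ m ∈ Finset.Icc 1 n, (θ ^ m / m.factorial * Real.exp (-θ)) *
        (m * (lam * n) ^ (n - m) / (n * (n - m).factorial) * Real.exp (-(lam * n)))
    = θ * (θ + lam * n) ^ (n - 1) / n.factorial * Real.exp (-(θ + lam * n)) := by
  obtain ⟨s, rfl⟩ := Nat.exists_eq_add_of_le' hn
  have factor_exp : ∀ m ∈ Icc 1 (s + 1),
      (θ ^ m / m.factorial * Real.exp (-θ)) *
        (m * (lam * ↑(s + 1)) ^ (s + 1 - m) / (↑(s + 1) * (s + 1 - m).factorial) *
          Real.exp (-(lam * ↑(s + 1))))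
      = θ ^ m / m.factorial *
          (m * (lam * ↑(s + 1)) ^ (s + 1 - m) / (↑(s + 1) * (s + 1 - m).factorial)) *
        (Real.exp (-θ) * Real.exp (-(lam * ↑(s + 1)))) :=
    fun _ _ => by ring
  rw [sum_congr rfl factor_exp, ← sum_mul, sum_Icc_pow_div_factorial_mul_borelTanner,
    ← Real.exp_add, neg_add, Nat.add_sub_cancel]

theorem stmt5 (lam θ : ℝ) (h0 : 0 < lam) (h1 : lam ≤ 1) (hθ : 0 < θ) (n : ℕ) (hn : 1 ≤ n) :
    ∑ m ∈ Finset.Icc 1 n, (θ ^ m / m.factorial * Real.exp (-θ)) *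
        (m * (lam * n) ^ (n - m) / (n * (n - m).factorial) * Real.exp (-(lam * n)))
    = θ * (θ + lam * n) ^ (n - 1) / n.factorial * Real.exp (-(θ + lam * n)) :=
  stmt5_general lam θ n hn
end

section
/- For θ > 0 and λ ∈ (0,1), the mean of the generalized Poisson distribution is θ/(1-λ): ∑_{n=0}^∞ n · θ(θ+λn)^{n-1}/n! · e^{-(θ+λn)} = θ/(1-λ). -/
open Finset Real FormalMultilinearSeries
open scoped Nat

/-!
Writing `n = m + 1` and `c = (θ + λ) / λ`, the series becomes
`θ e^{-(θ+λ)} ∑ₘ (c + m)^m / m! · (λ e^{-λ})^m`, so it suffices to show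
`∑ₘ (c + m)^m / m! · (λ e^{-λ})^m = e^{cλ} / (1 - λ)`.
For small `λ`, expanding every `e^{-(c+m)λ}` into its power series gives an absolutely convergent
double series whose antidiagonal sums are `λⁿ`, because the `n`-th forward difference of `x ↦ xⁿ`
is `n!`. Both sides are analytic in `λ` on `(0, 1)`, the left one because `λ e^{-λ} < 1/e` stays
inside the radius of convergence, so the identity extends to all of `(0, 1)`.
-/

theorem sum_range_neg_one_pow_mul_choose_mul_add_pow {R : Type*} [CommRing R] (n : ℕ) (y : R) :
    ∑ k ∈ range (n + 1), (-1) ^ (n - k) * (n.choose k : R) * (y + k) ^ n = n ! := by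
  have h := congr_fun (fwdDiff_iter_eq_factorial (R := R) (n := n)) y
  rw [fwdDiff_iter_eq_sum_shift] at h
  simpa [zsmul_eq_mul] using h

theorem HasSum.sum_antidiagonal {α A : Type*} [AddCommMonoid α] [TopologicalSpace α]
    [ContinuousAdd α] [RegularSpace α] [AddCommMonoid A] [HasAntidiagonal A]
    {f : A × A → α} {a : α} (hf : HasSum f a) :
    HasSum (fun n ↦ ∑ p ∈ antidiagonal n, f p) a :=
  (HasAntidiagonal.sigmaAntidiagonalEquivProd.hasSum_iff.2 hf).sigma
    fun n ↦ Finset.hasSum (antidiagonal n) f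

theorem Real.hasSum_pow_div_factorial (x : ℝ) : HasSum (fun n ↦ x ^ n / n !) (exp x) :=
  Real.exp_eq_exp_ℝ ▸ NormedSpace.expSeries_div_hasSum_exp x

theorem Real.mul_exp_neg_lt_exp_neg_one {x : ℝ} (hx : x ≠ 1) : x * exp (-x) < exp (-1) := by
  have h : x < exp (x - 1) := by linarith [add_one_lt_exp (sub_ne_zero.2 hx)]
  calc x * exp (-x) < exp (x - 1) * exp (-x) := by gcongr
    _ = exp (-1) := by rw [← exp_add]; ring_nf

/-- The Taylor coefficients of `w ↦ e^{c T(w)} / (1 - T(w))`, where `T = w e^T` is the tree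
function. -/
noncomputable def abelCoeff (c : ℝ) (m : ℕ) : ℝ := (c + m) ^ m / m !

section
variable {c : ℝ}

theorem abelCoeff_nonneg (hc : 0 ≤ c) (m : ℕ) : 0 ≤ abelCoeff c m := by
  unfold abelCoeff; positivity

theorem abelCoeff_le (hc : 0 ≤ c) (m : ℕ) : abelCoeff c m ≤ exp c * exp 1 ^ m := by
  rw [← exp_nat_mul, mul_one, ← exp_add]
  exact pow_div_factorial_le_exp _ (by positivity) m

theorem summable_abelCoeff_mul_pow (hc : 0 ≤ c) {r : ℝ} (hr0 : 0 ≤ r) (hr : r < exp (-1)) :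
    Summable fun m ↦ abelCoeff c m * r ^ m := by
  replace hr : exp 1 * r < 1 := by
    calc exp 1 * r < exp 1 * exp (-1) := by gcongr
      _ = 1 := by rw [← exp_add, add_neg_cancel, exp_zero]
  refine .of_nonneg_of_le (fun m ↦ by have := abelCoeff_nonneg hc m; positivity) (fun m ↦ ?_)
    ((summable_geometric_of_lt_one (by positivity) hr).mul_left (exp c))
  calc abelCoeff c m * r ^ m ≤ exp c * exp 1 ^ m * r ^ m := by
        gcongr; exact abelCoeff_le hc m
    _ = exp c * (exp 1 * r) ^ m := by ring

theorem sum_antidiagonal_abelCoeff_mul_pow (c l : ℝ) (n : ℕ) :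
    ∑ p ∈ antidiagonal n, abelCoeff c p.1 * l ^ p.1 * ((-(c + p.1) * l) ^ p.2 / p.2 !) =
      l ^ n := by
  rw [Nat.sum_antidiagonal_eq_sum_range_succ_mk]
  have hterm : ∀ m ∈ range (n + 1),
      abelCoeff c m * l ^ m * ((-(c + m) * l) ^ (n - m) / (n - m)!) =
        l ^ n / n ! * ((-1) ^ (n - m) * (n.choose m : ℝ) * (c + m) ^ n) := by
    intro m hm
    obtain ⟨k, rfl⟩ := Nat.exists_eq_add_of_le (Nat.lt_succ_iff.mp (mem_range.mp hm))
    rw [Nat.cast_choose ℝ (Nat.le_add_right m k), Nat.add_sub_cancel_left, abelCoeff,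
      neg_mul, neg_eq_neg_one_mul, mul_pow, mul_pow]
    field_simp
    ring
  rw [sum_congr rfl hterm, ← mul_sum, sum_range_neg_one_pow_mul_choose_mul_add_pow]
  field_simp

theorem hasSum_abelCoeff_mul_pow_of_small (hc : 0 ≤ c) {l : ℝ} (hl : 0 ≤ l)
    (hsmall : l * exp l < exp (-1)) :
    HasSum (fun m ↦ abelCoeff c m * (l * exp (-l)) ^ m) (exp (c * l) / (1 - l)) := by
  have hl1 : l < 1 := by
    by_contra! h
    have : exp (-1) < l * exp l := (exp_neg_one_lt_half.trans (by norm_num)).trans_le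
      (one_le_mul_of_one_le_of_one_le h (one_le_exp (by linarith)))
    linarith
  have hcm (m : ℕ) : 0 ≤ c + m := by positivity
  set f : ℕ × ℕ → ℝ := fun p ↦ abelCoeff c p.1 * l ^ p.1 * ((-(c + p.1) * l) ^ p.2 / p.2 !)
  have hrow (m : ℕ) : HasSum (fun k ↦ f (m, k)) (abelCoeff c m * l ^ m * exp (-(c + m) * l)) :=
    (hasSum_pow_div_factorial _).mul_left _
  have hrow_norm (m : ℕ) : HasSum (fun k ↦ ‖f (m, k)‖)
      (exp (c * l) * (abelCoeff c m * (l * exp l) ^ m)) := by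
    have hnorm (k : ℕ) : ‖f (m, k)‖ = abelCoeff c m * l ^ m * (((c + m) * l) ^ k / k !) := by
      rw [Real.norm_eq_abs, abs_mul, abs_div, abs_pow, neg_mul, abs_neg, Nat.abs_cast,
        abs_of_nonneg (by have := abelCoeff_nonneg hc m; positivity),
        abs_of_nonneg (by have := hcm m; positivity)]
    have hrow_sum : exp (c * l) * (abelCoeff c m * (l * exp l) ^ m) =
        abelCoeff c m * l ^ m * exp ((c + m) * l) := by
      rw [mul_pow, ← exp_nat_mul, add_mul, exp_add]
      ring
    simpa only [hnorm, hrow_sum] using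
      (hasSum_pow_div_factorial ((c + m) * l)).mul_left (abelCoeff c m * l ^ m)
  have hf : Summable f := by
    refine .of_norm ((summable_prod_of_nonneg fun p ↦ norm_nonneg _).2
      ⟨fun m ↦ (hrow_norm m).summable, ?_⟩)
    simp only [fun m ↦ (hrow_norm m).tsum_eq]
    exact (summable_abelCoeff_mul_pow hc (by positivity) hsmall).mul_left _
  have hsum : HasSum f (1 - l)⁻¹ := by
    have hdiag := hf.hasSum.sum_antidiagonal
    simp only [f, sum_antidiagonal_abelCoeff_mul_pow] at hdiag
    rw [← hdiag.unique (hasSum_geometric_of_lt_one hl hl1)]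
    exact hf.hasSum
  have hterm (m : ℕ) : exp (c * l) * (abelCoeff c m * l ^ m * exp (-(c + m) * l)) =
      abelCoeff c m * (l * exp (-l)) ^ m := by
    rw [mul_pow, ← exp_nat_mul, show (m : ℝ) * -l = c * l + -(c + m) * l by ring, exp_add]
    ring
  simpa only [hterm, div_eq_mul_inv] using (hsum.prod_fiberwise hrow).mul_left (exp (c * l))

theorem exp_neg_one_le_radius_ofScalars_abelCoeff (hc : 0 ≤ c) :
    ENNReal.ofReal (exp (-1)) ≤ (ofScalars ℝ (abelCoeff c)).radius := by
  refine ENNReal.le_of_forall_nnreal_lt fun r hr ↦ le_radius_of_summable _ ?_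
  rw [ENNReal.coe_lt_ofReal] at hr
  refine (summable_abelCoeff_mul_pow hc r.2 hr).congr fun n ↦ ?_
  rw [ofScalars_norm, Real.norm_of_nonneg (abelCoeff_nonneg hc n)]
  rfl

theorem analyticAt_ofScalarsSum_abelCoeff (hc : 0 ≤ c) {x : ℝ} (hx : |x| < exp (-1)) :
    AnalyticAt ℝ (ofScalarsSum (abelCoeff c)) x := by
  have hrad := exp_neg_one_le_radius_ofScalars_abelCoeff hc
  refine ((ofScalars ℝ (abelCoeff c)).hasFPowerSeriesOnBall
    ((ENNReal.ofReal_pos.2 (exp_pos _)).trans_le hrad)).analyticAt_of_mem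
    (Metric.eball_subset_eball hrad ?_)
  rw [Metric.mem_eball, edist_dist, Real.dist_0_eq_abs]
  exact (ENNReal.ofReal_lt_ofReal_iff_of_nonneg (abs_nonneg x)).2 hx

theorem hasSum_abelCoeff_mul_pow (hc : 0 ≤ c) {l : ℝ} (hl : l ∈ Set.Ioo 0 1) :
    HasSum (fun m ↦ abelCoeff c m * (l * exp (-l)) ^ m) (exp (c * l) / (1 - l)) := by
  have hu (x : ℝ) (hx : x ∈ Set.Ioo (0 : ℝ) 1) : |x * exp (-x)| < exp (-1) := by
    rw [abs_of_pos (by have := hx.1; positivity)]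
    exact mul_exp_neg_lt_exp_neg_one hx.2.ne
  have hF : AnalyticOnNhd ℝ (fun x ↦ ofScalarsSum (abelCoeff c) (x * exp (-x))) (Set.Ioo 0 1) :=
    fun x hx ↦ (analyticAt_ofScalarsSum_abelCoeff hc (hu x hx)).comp
      (f := fun x ↦ x * exp (-x)) (analyticAt_id.mul analyticAt_id.neg.rexp)
  have hG : AnalyticOnNhd ℝ (fun x ↦ exp (c * x) / (1 - x)) (Set.Ioo 0 1) :=
    fun x hx ↦ ((analyticAt_const.mul analyticAt_id).rexp).div
      (analyticAt_const.sub analyticAt_id) (sub_ne_zero.2 hx.2.ne')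
  have hsmall : ∀ x ∈ Set.Ioo (0 : ℝ) (1 / 8),
      ofScalarsSum (abelCoeff c) (x * exp (-x)) = exp (c * x) / (1 - x) := by
    intro x hx
    have hx_small : x * exp x < exp (-1) := by
      calc x * exp x ≤ 1 / 8 * exp 1 := by gcongr <;> linarith [hx.2]
        _ < exp (-1) := by
          have hexp : exp 1 * exp (-1) = 1 := by rw [← exp_add, add_neg_cancel, exp_zero]
          nlinarith [exp_one_lt_d9, exp_pos 1]
    simp only [ofScalarsSum_eq_tsum, smul_eq_mul]
    exact (hasSum_abelCoeff_mul_pow_of_small hc hx.1.le hx_small).tsum_eq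
  have heq := hF.eqOn_of_preconnected_of_eventuallyEq hG isPreconnected_Ioo
    (by norm_num : (1 / 16 : ℝ) ∈ Set.Ioo 0 1)
    (Filter.eventually_of_mem (Ioo_mem_nhds (by norm_num) (by norm_num)) hsmall)
  have hsum := summable_abelCoeff_mul_pow hc (by have := hl.1; positivity)
    (mul_exp_neg_lt_exp_neg_one hl.2.ne)
  have hl_eq := heq hl
  simp only [ofScalarsSum_eq_tsum, smul_eq_mul] at hl_eq
  exact hl_eq ▸ hsum.hasSum

end

theorem succ_mul_gpd_term_eq (θ : ℝ) {lam : ℝ} (hlam : lam ≠ 0) (m : ℕ) :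
    ((m + 1 : ℕ) : ℝ) * (θ * (θ + lam * (m + 1 : ℕ)) ^ (((m + 1 : ℕ) : ℤ) - 1) / (m + 1)! *
        exp (-(θ + lam * (m + 1 : ℕ)))) =
      θ * exp (-(θ + lam)) * (abelCoeff ((θ + lam) / lam) m * (lam * exp (-lam)) ^ m) := by
  have hbase : θ + lam * (m + 1 : ℕ) = lam * ((θ + lam) / lam + m) := by
    push_cast; field_simp; ring
  have hexp : exp (-(θ + lam * (m + 1 : ℕ))) = exp (-(θ + lam)) * exp (-lam) ^ m := by
    rw [← exp_nat_mul, ← exp_add]; push_cast; ring_nf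
  have hpow : ((m + 1 : ℕ) : ℤ) - 1 = m := by push_cast; ring
  rw [hexp, hbase, hpow, zpow_natCast, Nat.factorial_succ, abelCoeff, mul_pow, mul_pow]
  push_cast
  field_simp

theorem stmt7 (θ lam : ℝ) (hθ : 0 < θ) (hlam : lam ∈ Set.Ioo (0 : ℝ) 1) :
    ∑' n : ℕ, (n : ℝ) * (θ * (θ + lam * n) ^ ((n : ℤ) - 1) / n.factorial *
        Real.exp (-(θ + lam * n)))
    = θ / (1 - lam) := by
  obtain ⟨hl0, hl1⟩ := hlam
  have hc : 0 ≤ (θ + lam) / lam := by positivity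
  have hcl : (θ + lam) / lam * lam = θ + lam := div_mul_cancel₀ _ hl0.ne'
  refine ((hasSum_nat_add_iff' 1).1 ?_).tsum_eq
  simp only [succ_mul_gpd_term_eq θ hl0.ne', range_one, sum_singleton, Nat.cast_zero, zero_mul,
    sub_zero]
  have hsum := (hasSum_abelCoeff_mul_pow hc ⟨hl0, hl1⟩).mul_left (θ * exp (-(θ + lam)))
  have hval : θ * exp (-(θ + lam)) * (exp (θ + lam) / (1 - lam)) = θ / (1 - lam) := by
    rw [exp_neg]; field_simp
  rwa [hcl, hval] at hsum
end

section
/- Let λ ∈ (0,1), θ ≥ 0, m ≥ 2, and n ≥ 0. Then ∑ over m-tuples (n_1,...,n_m) of nonnegative integers with n_1+⋯+n_m = n of ∏_{k=1}^m (1-λ)(θ/m + λn_k)^{n_k}/n_k! · e^{-(θ/m + λn_k)} equals (1-λ)^m (θ + λn + λ·α(m-1))^n / n! · e^{-(θ+λn)}, where (θ + λn + λα(m-1))^n is expanded by the binomial theorem with the symbol α^ℓ(m-1) replaced by C(m+ℓ-2, ℓ)·ℓ!. -/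
/-!
Write `s_a(x) = (x + λ a) ^ a / a!` (`abelSeq`). Each factor on the left is
`(1 - λ) e^{-(θ/m + λ n_k)} s_{n_k}(θ/m)`, so the left-hand side is `(1 - λ)^m e^{-(θ + λ n)}`
times the `m`-fold convolution of `s(θ/m)`.

The key input is Abel's identity `∑_{i+j=n} s_i(x) s_j(y) = ∑_{l+j=n} λ^l s_j(x + y + λ l)`.
Since `s_{a+1}'(y) = s_a(y + λ)`, both sides `F_n(y)` satisfy `F_{n+1}' = F_n(· + λ)`, so by
induction it suffices to compare them at one point. At `y = -(x + λ n)` the left side is the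
`n`-th forward difference of `r ↦ (x + λ r)^n` divided by `n!`, i.e. `λ^n`, and on the right
only the term `l = n` survives.
Convolving with `s(x)` once more raises the exponent of `(1 - λ w)^{-1}` in the generating
function by one, which on coefficients is the hockey-stick identity for `multichoose`. Finally
`l! · multichoose r l = r (r + 1) ⋯ (r + l - 1)` is Riordan's symbol `α^l(r)`.
-/

open Finset fwdDiff Nat

theorem Finset.Nat.sum_antidiagonalTuple_succ {M : Type*} [AddCommMonoid M] (k n : ℕ)
    (g : (Fin (k + 1) → ℕ) → M) :
    ∑ f ∈ antidiagonalTuple (k + 1) n, g f =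
      ∑ p ∈ antidiagonal n, ∑ f ∈ antidiagonalTuple k p.2, g (Fin.cons p.1 f) := by
  simp only [Finset.sum, antidiagonalTuple, Multiset.Nat.antidiagonalTuple,
    List.Nat.antidiagonalTuple, Multiset.map_coe, Multiset.sum_coe]
  simp only [List.flatMap, List.map_flatten, List.map_map, Function.comp_def, List.sum_flatten,
    sum_map_val]
  rfl

theorem Finset.Nat.sum_antidiagonal_sum_antidiagonal {M : Type*} [AddCommMonoid M]
    (f : ℕ → ℕ → ℕ → M) (n : ℕ) :
    ∑ p ∈ antidiagonal n, ∑ q ∈ antidiagonal p.2, f p.1 q.1 q.2 =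
      ∑ p ∈ antidiagonal n, ∑ q ∈ antidiagonal p.1, f q.1 q.2 p.2 := by
  simp only [Finset.sum_sigma']
  apply Finset.sum_nbij' (fun x ↦ ⟨(x.1.1 + x.2.1, x.2.2), (x.1.1, x.2.1)⟩)
    (fun x ↦ ⟨(x.2.1, x.2.2 + x.1.2), (x.2.2, x.1.2)⟩) <;> aesop (add simp [add_assoc])

theorem Finset.Nat.sum_antidiagonal_sum_antidiagonal_left_comm {M : Type*} [AddCommMonoid M]
    (f : ℕ → ℕ → ℕ → M) (n : ℕ) :
    ∑ p ∈ antidiagonal n, ∑ q ∈ antidiagonal p.2, f p.1 q.1 q.2 =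
      ∑ p ∈ antidiagonal n, ∑ q ∈ antidiagonal p.2, f q.1 p.1 q.2 := by
  simp only [Finset.sum_sigma']
  apply Finset.sum_nbij' (fun x ↦ ⟨(x.2.1, x.1.1 + x.2.2), (x.1.1, x.2.2)⟩)
    (fun x ↦ ⟨(x.2.1, x.1.1 + x.2.2), (x.1.1, x.2.2)⟩) <;> aesop (add simp [add_left_comm])

theorem Finset.Nat.sum_antidiagonal_multichoose (r n : ℕ) :
    ∑ p ∈ antidiagonal n, r.multichoose p.1 = (r + 1).multichoose n := by
  rw [Nat.sum_antidiagonal_eq_sum_range_succ_mk, sum_range_multichoose, multichoose_eq,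
    add_right_comm, add_tsub_cancel_right, add_comm, choose_symm_add]

theorem fwdDiff_iter_affine_pow {R : Type*} [CommRing R] (a b : R) (n : ℕ) (y : R) :
    Δ_[1] ^[n] (fun r ↦ (a + b * r) ^ n) y = n ! * b ^ n := by
  have hsplit : (fun r ↦ (a + b * r) ^ n) =
      (fun r ↦ ∑ k ∈ range n, (b ^ k * a ^ (n - k) * n.choose k) * r ^ k) +
        b ^ n • fun r ↦ r ^ n := by
    ext r
    rw [add_comm, add_pow, sum_range_succ]
    simp only [Pi.add_apply, Pi.smul_apply, smul_eq_mul, mul_pow, tsub_self, pow_zero, choose_self,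
      cast_one, mul_one]
    congr 1
    refine sum_congr rfl fun k _ ↦ ?_
    ring
  rw [hsplit, fwdDiff_iter_add, fwdDiff_iter_sum_mul_pow_eq_zero, fwdDiff_iter_const_smul,
    fwdDiff_iter_eq_factorial]
  simp [mul_comm]

noncomputable def abelSeq (lam x : ℝ) (a : ℕ) : ℝ := (x + lam * a) ^ a / a !

section
variable (lam : ℝ)

@[simp] theorem abelSeq_zero (x : ℝ) : abelSeq lam x 0 = 1 := by simp [abelSeq]

theorem hasDerivAt_abelSeq_succ (a : ℕ) (x : ℝ) :
    HasDerivAt (fun y ↦ abelSeq lam y (a + 1)) (abelSeq lam (x + lam) a) x := by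
  have h := (((hasDerivAt_id x).add_const (lam * (a + 1 : ℕ))).pow (a + 1)).div_const
    ((a + 1 : ℕ) ! : ℝ)
  refine h.congr_deriv ?_
  rw [abelSeq, add_tsub_cancel_right, factorial_succ, cast_mul, cast_succ, id]
  field_simp
  ring

theorem hasDerivAt_sum_antidiagonal_abelSeq (c g : ℕ → ℝ) (n : ℕ) (y : ℝ) :
    HasDerivAt (fun y ↦ ∑ p ∈ antidiagonal (n + 1), c p.1 * abelSeq lam (g p.1 + y) p.2)
      (∑ p ∈ antidiagonal n, c p.1 * abelSeq lam (g p.1 + (y + lam)) p.2) y := by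
  simp only [Nat.sum_antidiagonal_succ', abelSeq_zero]
  refine (HasDerivAt.fun_sum fun p _ ↦ ?_).const_add _
  rw [← add_assoc]
  exact ((hasDerivAt_abelSeq_succ lam p.2 (g p.1 + y)).comp_const_add (g p.1) y).const_mul
    (c p.1)

theorem sum_antidiagonal_abelSeq_congr {c c' g g' : ℕ → ℝ} (a : ℕ → ℝ) (h0 : c 0 = c' 0)
    (ha : ∀ n, ∑ p ∈ antidiagonal (n + 1), c p.1 * abelSeq lam (g p.1 + a n) p.2 =
      ∑ p ∈ antidiagonal (n + 1), c' p.1 * abelSeq lam (g' p.1 + a n) p.2) (n : ℕ) (y : ℝ) :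
    ∑ p ∈ antidiagonal n, c p.1 * abelSeq lam (g p.1 + y) p.2 =
      ∑ p ∈ antidiagonal n, c' p.1 * abelSeq lam (g' p.1 + y) p.2 := by
  induction n generalizing y with
  | zero => simp [h0]
  | succ n ih =>
    have hderiv : ∀ z, HasDerivAt (fun y ↦
        ∑ p ∈ antidiagonal (n + 1), c p.1 * abelSeq lam (g p.1 + y) p.2 -
          ∑ p ∈ antidiagonal (n + 1), c' p.1 * abelSeq lam (g' p.1 + y) p.2) 0 z := fun z ↦ by
      simpa [ih (z + lam)] using
        (hasDerivAt_sum_antidiagonal_abelSeq lam c g n z).fun_sub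
          (hasDerivAt_sum_antidiagonal_abelSeq lam c' g' n z)
    have hconst := is_const_of_deriv_eq_zero (fun z ↦ (hderiv z).differentiableAt)
      (fun z ↦ (hderiv z).deriv) y (a n)
    rwa [ha n, sub_self, sub_eq_zero] at hconst

theorem sum_antidiagonal_abelSeq_mul_neg (x : ℝ) (n : ℕ) :
    ∑ p ∈ antidiagonal n, abelSeq lam x p.1 * abelSeq lam (-(x + lam * n)) p.2 = lam ^ n := by
  have hdiff := fwdDiff_iter_affine_pow x lam n 0
  rw [fwdDiff_iter_eq_sum_shift] at hdiff
  rw [Nat.sum_antidiagonal_eq_sum_range_succ_mk, ← mul_left_cancel_iff_of_pos (a := (n ! : ℝ))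
    (by positivity), ← hdiff, mul_sum]
  refine sum_congr rfl fun k hk ↦ ?_
  have hkn : k ≤ n := Nat.lt_succ_iff.mp (mem_range.mp hk)
  have hbase : -(x + lam * n) + lam * (n - k : ℕ) = -(x + lam * k) := by
    rw [cast_sub hkn]; ring
  simp only [abelSeq, hbase, zsmul_eq_mul, zero_add, nsmul_eq_mul, mul_one,
    Int.cast_mul, Int.cast_pow, Int.cast_neg, Int.cast_one, Int.cast_natCast, cast_choose ℝ hkn]
  rw [neg_pow, ← pow_mul_pow_sub _ hkn]
  field_simp

theorem sum_antidiagonal_abelSeq_mul (x y : ℝ) (n : ℕ) :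
    ∑ p ∈ antidiagonal n, abelSeq lam x p.1 * abelSeq lam y p.2 =
      ∑ p ∈ antidiagonal n, lam ^ p.1 * abelSeq lam (x + y + lam * p.1) p.2 := by
  have key := sum_antidiagonal_abelSeq_congr lam (c := abelSeq lam x) (g := 0) (c' := (lam ^ ·))
    (g' := fun i ↦ x + lam * i) (fun n ↦ -(x + lam * (n + 1 : ℕ))) (by simp) (fun n ↦ ?_) n y
  · simpa [add_right_comm] using key
  trans lam ^ (n + 1)
  · simpa only [Pi.zero_apply, zero_add] using sum_antidiagonal_abelSeq_mul_neg lam x (n + 1)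
  rw [Nat.sum_antidiagonal_succ', sum_eq_zero fun p hp ↦ ?_]
  · simp
  have hbase : x + lam * p.1 + -(x + lam * (n + 1 : ℕ)) + lam * (p.2 + 1 : ℕ) = 0 := by
    rw [← mem_antidiagonal.mp hp]; push_cast; ring
  rw [abelSeq, hbase, zero_pow (succ_ne_zero _), zero_div, mul_zero]

/-- The coefficient of `t ^ n` in `exp (y * w) / (1 - lam * w) ^ (r + 1)`, where
`w = t * exp (lam * w)`. -/
noncomputable def abelSeqPow (r : ℕ) (y : ℝ) (n : ℕ) : ℝ :=
  ∑ p ∈ antidiagonal n, lam ^ p.1 * r.multichoose p.1 * abelSeq lam (y + lam * p.1) p.2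

theorem abelSeqPow_zero (y : ℝ) (n : ℕ) : abelSeqPow lam 0 y n = abelSeq lam y n := by
  rw [abelSeqPow, Nat.sum_antidiagonal_eq_sum_range_succ_mk, sum_range_succ', sum_eq_zero] <;>
    simp

theorem sum_antidiagonal_abelSeq_mul_abelSeqPow (r : ℕ) (x y : ℝ) (n : ℕ) :
    ∑ p ∈ antidiagonal n, abelSeq lam x p.1 * abelSeqPow lam r y p.2 =
      abelSeqPow lam (r + 1) (x + y) n := by
  calc ∑ p ∈ antidiagonal n, abelSeq lam x p.1 * abelSeqPow lam r y p.2
      = ∑ p ∈ antidiagonal n, lam ^ p.1 * r.multichoose p.1 *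
          ∑ q ∈ antidiagonal p.2, abelSeq lam x q.1 * abelSeq lam (y + lam * p.1) q.2 := by
        simp only [abelSeqPow, mul_sum]
        refine (Nat.sum_antidiagonal_sum_antidiagonal_left_comm (fun i l j ↦ abelSeq lam x i *
          (lam ^ l * r.multichoose l * abelSeq lam (y + lam * l) j)) n).trans ?_
        exact sum_congr rfl fun p _ ↦ sum_congr rfl fun q _ ↦ by ring
    _ = ∑ p ∈ antidiagonal n, ∑ q ∈ antidiagonal p.2, r.multichoose p.1 *
          (lam ^ (p.1 + q.1) * abelSeq lam (x + y + lam * (p.1 + q.1 : ℕ)) q.2) := by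
        simp only [sum_antidiagonal_abelSeq_mul, mul_sum]
        refine sum_congr rfl fun p _ ↦ sum_congr rfl fun q _ ↦ ?_
        push_cast
        ring_nf
    _ = ∑ p ∈ antidiagonal n, (∑ q ∈ antidiagonal p.1, (r.multichoose q.1 : ℝ)) *
          (lam ^ p.1 * abelSeq lam (x + y + lam * p.1) p.2) := by
        simp only [sum_mul]
        refine (Nat.sum_antidiagonal_sum_antidiagonal (fun l k j ↦ r.multichoose l *
          (lam ^ (l + k) * abelSeq lam (x + y + lam * (l + k : ℕ)) j)) n).trans ?_
        refine sum_congr rfl fun p _ ↦ sum_congr rfl fun q hq ↦ ?_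
        rw [mem_antidiagonal.mp hq]
    _ = abelSeqPow lam (r + 1) (x + y) n := by
        simp only [← Nat.cast_sum, Nat.sum_antidiagonal_multichoose, abelSeqPow]
        exact sum_congr rfl fun p _ ↦ by ring

theorem abelSeqPow_eq (r : ℕ) (y : ℝ) (n : ℕ) :
    abelSeqPow lam r y n = (∑ p ∈ antidiagonal n,
      n.choose p.1 * (y + lam * n) ^ p.1 * lam ^ p.2 * r.ascFactorial p.2) / n ! := by
  rw [abelSeqPow, ← Nat.sum_antidiagonal_swap, sum_div]
  refine sum_congr rfl fun ⟨i, j⟩ hp ↦ ?_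
  obtain rfl : i + j = n := mem_antidiagonal.mp hp
  have hchoose : ((i + j).choose j * i ! * j ! : ℝ) = (i + j)! := by
    exact_mod_cast add_choose_mul_factorial_mul_factorial i j
  rw [ascFactorial_eq_factorial_mul_choose', ← multichoose_eq, ← hchoose]
  simp only [abelSeq, Prod.swap]
  rw [choose_symm_add]
  have hc : ((i + j).choose j : ℝ) ≠ 0 := cast_ne_zero.mpr (choose_pos (le_add_left j i)).ne'
  push_cast
  field_simp
  ring

theorem sum_antidiagonalTuple_prod_abelSeq (x : ℝ) (r n : ℕ) :
    ∑ f ∈ Nat.antidiagonalTuple (r + 1) n, ∏ i, abelSeq lam x (f i) =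
      abelSeqPow lam r ((r + 1 : ℕ) * x) n := by
  induction r generalizing n with
  | zero => simp [abelSeqPow_zero]
  | succ r ih =>
    simp only [Nat.sum_antidiagonalTuple_succ (r + 1), Fin.prod_univ_succ (n := r + 1),
      Fin.cons_zero, Fin.cons_succ, ← mul_sum, ih, sum_antidiagonal_abelSeq_mul_abelSeqPow]
    congr 1
    push_cast
    ring

theorem prod_one_sub_mul_abelSeq_mul_exp (x : ℝ) {m : ℕ} (f : Fin m → ℕ) :
    ∏ k, (1 - lam) * (x + lam * f k) ^ (f k) / (f k)! * Real.exp (-(x + lam * f k)) =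
      (1 - lam) ^ m * Real.exp (-(m * x + lam * (∑ k, f k : ℕ))) * ∏ k, abelSeq lam x (f k) := by
  have hfactor : ∀ k,
      (1 - lam) * (x + lam * f k) ^ (f k) / (f k)! * Real.exp (-(x + lam * f k)) =
        (1 - lam) * Real.exp (-(x + lam * f k)) * abelSeq lam x (f k) := fun k ↦ by
    rw [abelSeq]; ring
  simp only [hfactor, prod_mul_distrib, prod_const, Finset.card_fin, ← Real.exp_sum,
    sum_neg_distrib, sum_add_distrib, ← mul_sum, sum_const, nsmul_eq_mul]
  push_cast
  ring_nf

end

theorem stmt11_general (θ lam : ℝ)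
    (m : ℕ) (hm : 2 ≤ m) (n : ℕ) :
    ∑ f ∈ Finset.Nat.antidiagonalTuple m n,
      ∏ k, (1 - lam) * (θ / m + lam * f k) ^ (f k) / (f k).factorial *
        Real.exp (-(θ / m + lam * f k))
    = (1 - lam) ^ m * Real.exp (-(θ + lam * n)) / n.factorial *
        ∑ k ∈ Finset.range (n + 1), (Nat.choose n k : ℝ) * (θ + lam * n) ^ k *
          lam ^ (n - k) * ((m + n - k - 2).factorial / (m - 2).factorial : ℝ) := by
  obtain ⟨c, rfl⟩ : ∃ c, m = c + 1 + 1 := ⟨m - 2, by omega⟩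
  have hθ : ((c + 1 + 1 : ℕ) : ℝ) * (θ / (c + 1 + 1 : ℕ)) = θ :=
    mul_div_cancel₀ θ (by positivity)
  rw [sum_congr rfl fun f hf ↦ by rw [prod_one_sub_mul_abelSeq_mul_exp,
    (Nat.mem_antidiagonalTuple.mp hf), hθ], ← mul_sum, sum_antidiagonalTuple_prod_abelSeq, hθ,
    abelSeqPow_eq, Nat.sum_antidiagonal_eq_sum_range_succ_mk, div_mul_eq_mul_div, mul_div_assoc]
  congr 2
  refine sum_congr rfl fun k hk ↦ ?_
  have hkn : k ≤ n := Nat.lt_succ_iff.mp (mem_range.mp hk)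
  rw [show c + 1 + 1 + n - k - 2 = c + (n - k) by omega, show c + 1 + 1 - 2 = c by omega,
    ← factorial_mul_ascFactorial]
  push_cast
  field_simp

theorem stmt11 (θ lam : ℝ) (hθ : 0 ≤ θ) (hlam : lam ∈ Set.Ioo (0 : ℝ) 1)
    (m : ℕ) (hm : 2 ≤ m) (n : ℕ) :
    ∑ f ∈ Finset.Nat.antidiagonalTuple m n,
      ∏ k, (1 - lam) * (θ / m + lam * f k) ^ (f k) / (f k).factorial *
        Real.exp (-(θ / m + lam * f k))
    = (1 - lam) ^ m * Real.exp (-(θ + lam * n)) / n.factorial *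
        ∑ k ∈ Finset.range (n + 1), (Nat.choose n k : ℝ) * (θ + lam * n) ^ k *
          lam ^ (n - k) * ((m + n - k - 2).factorial / (m - 2).factorial : ℝ) :=
  stmt11_general θ lam m hm n
end

section
/- Let p(θ,λ,m;n) = (1-λ)^m(θ+λn+λα(m-1))^n/n! · e^{-(θ+λn)} be the compound Delaporte mass function (with α^ℓ(m-1) = C(m+ℓ-2,ℓ)·ℓ! in the binomial expansion). Then for all n ≥ 1: p(θ,λ,m;n) = (λ(m-1)/((1-λ)n)) · p(θ+λ, λ, m+1; n-1) + ((θ+λn)/n) · p(θ+λ, λ, m; n-1). -/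
open Finset

/-
The `(m+n-k-2)!/(m-2)!` in the mass function is the rising factorial `(m-1)^{(n-k)}`, so
up to its prefactor `p(θ,λ,m;n)` is the binomial-type sum `∑ C(n,k) x^k y^{n-k} (m-1)^{(n-k)}`
at `x = θ + λn`, `y = λ`. Pascal's rule splits this sum at `n + 1` into `x` times the sum at `n`
plus a part in which `(m-1)^{(j+1)} = (m-1) m^{(j)}` turns `m - 1` into `m`. Since
`θ + λ(n+1) = (θ + λ) + λn`, both sums at `n` are mass functions at `θ + λ`.
-/

/-- Compound Delaporte mass function with Borel summands, with Riordan's α-symbols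
expanded: `α^{n-k}(m-1) = (m+n-k-2)!/(m-2)!`. -/
noncomputable def compoundDelaporte (θ lam : ℝ) (m n : ℕ) : ℝ :=
  (1 - lam) ^ m * Real.exp (-(θ + lam * n)) / n.factorial *
    ∑ k ∈ Finset.range (n + 1), (Nat.choose n k : ℝ) * (θ + lam * n) ^ k *
      lam ^ (n - k) * ((m + n - k - 2).factorial / (m - 2).factorial : ℝ)

def ascFactorialBinomialSum {R : Type*} [CommSemiring R] (a : ℕ) (x y : R) (n : ℕ) : R :=
  ∑ k ∈ range (n + 1), (n.choose k : R) * x ^ k * y ^ (n - k) * (a.ascFactorial (n - k) : R)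

theorem Nat.ascFactorial_succ_eq_mul (a j : ℕ) :
    a.ascFactorial (j + 1) = a * (a + 1).ascFactorial j := by
  rw [succ_ascFactorial, ascFactorial_succ]

theorem ascFactorialBinomialSum_succ {R : Type*} [CommSemiring R] (a : ℕ) (x y : R) (n : ℕ) :
    ascFactorialBinomialSum a x y (n + 1)
      = a * y * ascFactorialBinomialSum (a + 1) x y n + x * ascFactorialBinomialSum a x y n := by
  have pascal := sum_choose_succ_mul
    (fun i j => x ^ i * y ^ j * (a.ascFactorial j : R)) n
  simp only [ascFactorialBinomialSum, ← mul_assoc, mul_sum] at pascal ⊢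
  rw [pascal]
  congr 1 <;> refine sum_congr rfl fun k hk => ?_
  · rw [Nat.sub_add_comm (mem_range_succ_iff.mp hk), Nat.ascFactorial_succ_eq_mul]
    push_cast
    ring
  · ring

theorem factorial_div_factorial_eq_ascFactorial (b j : ℕ) :
    ((b + j).factorial / b.factorial : ℝ) = ((b + 1).ascFactorial j : ℝ) := by
  rw [← Nat.factorial_mul_ascFactorial, Nat.cast_mul, mul_div_cancel_left₀ _ (by positivity)]

theorem compoundDelaporte_eq_mul_ascFactorialBinomialSum (θ lam : ℝ) (a n : ℕ) (ha : 1 ≤ a) :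
    compoundDelaporte θ lam (a + 1) n
      = (1 - lam) ^ (a + 1) * Real.exp (-(θ + lam * n)) / n.factorial
        * ascFactorialBinomialSum a (θ + lam * n) lam n := by
  obtain ⟨b, rfl⟩ : ∃ b, a = b + 1 := ⟨a - 1, by omega⟩
  unfold compoundDelaporte ascFactorialBinomialSum
  congr 1
  refine sum_congr rfl fun k hk => ?_
  have hk : k ≤ n := mem_range_succ_iff.mp hk
  rw [show b + 1 + 1 + n - k - 2 = b + (n - k) by omega, show b + 1 + 1 - 2 = b by omega,
    factorial_div_factorial_eq_ascFactorial]

theorem stmt13_general (θ lam : ℝ) (hlam : lam ∈ Set.Ioo (0 : ℝ) 1)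
    (m : ℕ) (hm : 2 ≤ m) (n : ℕ) (hn : 1 ≤ n) :
    compoundDelaporte θ lam m n
    = lam * ((m : ℝ) - 1) / ((1 - lam) * n) * compoundDelaporte (θ + lam) lam (m + 1) (n - 1)
      + (θ + lam * n) / n * compoundDelaporte (θ + lam) lam m (n - 1) := by
  obtain ⟨a, rfl⟩ : ∃ a, m = a + 1 := ⟨m - 1, by omega⟩
  obtain ⟨s, rfl⟩ : ∃ s, n = s + 1 := ⟨n - 1, by omega⟩
  have shift : θ + lam + lam * (s : ℝ) = θ + lam * ((s + 1 : ℕ) : ℝ) := by push_cast; ring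
  have ha : 1 ≤ a := by omega
  rw [Nat.add_sub_cancel, compoundDelaporte_eq_mul_ascFactorialBinomialSum _ _ _ _ ha,
    compoundDelaporte_eq_mul_ascFactorialBinomialSum _ _ _ _ ha,
    compoundDelaporte_eq_mul_ascFactorialBinomialSum _ _ _ _ (by omega), shift,
    ascFactorialBinomialSum_succ, Nat.factorial_succ]
  have hlam1 : 1 - lam ≠ 0 := by linarith [hlam.2]
  push_cast
  field_simp
  ring

theorem stmt13 (θ lam : ℝ) (hθ : 0 ≤ θ) (hlam : lam ∈ Set.Ioo (0 : ℝ) 1)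
    (m : ℕ) (hm : 2 ≤ m) (n : ℕ) (hn : 1 ≤ n) :
    compoundDelaporte θ lam m n
    = lam * ((m : ℝ) - 1) / ((1 - lam) * n) * compoundDelaporte (θ + lam) lam (m + 1) (n - 1)
      + (θ + lam * n) / n * compoundDelaporte (θ + lam) lam m (n - 1) :=
  stmt13_general θ lam hlam m hm n hn
end

section
/- Let (U_j) be i.i.d. ℕ-valued random variables (U_j ≥ 1) with mass function f, and suppose a claim-number distribution family p(θ,λ;·) on ℕ₀ satisfies p(θ,λ;n) = (a + b/n)·p(θ+λ,λ;n-1) for all n ≥ 1 and all θ in a set closed under adding λ. Define q(θ,λ;n) = ∑_{m=0}^∞ P{U_1+⋯+U_m = n}·p(θ,λ;m). Then q(θ,λ;0) = p(θ,λ;0) and for all n ≥ 1, q(θ,λ;n) = ∑_{k=1}^n (a + bk/n)·f(k)·q(θ+λ,λ;n-k). -/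
/-!
With `G = ∑ f k Xᵏ`, `conv f m n` is the `n`-th coefficient of `Gᵐ`. Comparing coefficients in
`X · (G^(m+1))' = (m+1) Gᵐ · X G'` gives
`n · conv f (m+1) n = (m+1) ∑ₖ k f(k) conv f m (n-k)`,
i.e. `E[U₁ | S_{m+1} = n] = n/(m+1)`. Hence
`∑ₖ (a + b k/n) f(k) conv f m (n-k) = (a + b/(m+1)) conv f (m+1) n`, which is exactly the factor
the recursion for `p` produces when `p θ (m+1)` is shifted to `p (θ + λ) m`; exchanging the two
finite sums (`conv f m n = 0` for `m > n`, as `f 0 = 0`) yields the recursion for `q`.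
-/

/-- `conv f m n` is the `m`-fold convolution power of the mass function `f`
evaluated at `n`, i.e. `P{U₁ + ⋯ + U_m = n}`. -/
noncomputable def conv (f : ℕ → ℝ) : ℕ → ℕ → ℝ
  | 0, n => if n = 0 then 1 else 0
  | m + 1, n => ∑ k ∈ Finset.range (n + 1), f k * conv f m (n - k)

open Finset PowerSeries

theorem PowerSeries.coeff_X_mul_derivative {R : Type*} [CommSemiring R] (φ : R⟦X⟧) (n : ℕ) :
    coeff n (X * d⁄dX R φ) = n * coeff n φ := by
  cases n with
  | zero => simp
  | succ n => rw [coeff_succ_X_mul, coeff_derivative]; push_cast; ring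

theorem PowerSeries.natCast_mul_coeff_pow_succ {R : Type*} [CommSemiring R] (φ : R⟦X⟧)
    (m n : ℕ) :
    n * coeff n (φ ^ (m + 1)) = (m + 1) * coeff n (φ ^ m * (X * d⁄dX R φ)) := by
  rw [← coeff_X_mul_derivative, derivative_pow, ← map_natCast (C (R := R)), ← coeff_C_mul]
  congr 1
  push_cast
  ring

theorem conv_succ (f : ℕ → ℝ) (m n : ℕ) :
    conv f (m + 1) n = ∑ k ∈ range (n + 1), f k * conv f m (n - k) := rfl

theorem conv_eq_coeff_pow (f : ℕ → ℝ) (m n : ℕ) : conv f m n = coeff n (mk f ^ m) := by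
  induction m generalizing n with
  | zero => simp [conv, coeff_one]
  | succ m ih =>
    rw [conv_succ, pow_succ', coeff_mul, Nat.sum_antidiagonal_eq_sum_range_succ
      (fun i j ↦ coeff i (mk f) * coeff j (mk f ^ m))]
    simp [ih]

theorem conv_eq_zero_of_lt {f : ℕ → ℝ} (hf0 : f 0 = 0) {m n : ℕ} (h : n < m) :
    conv f m n = 0 := by
  rw [conv_eq_coeff_pow]
  exact X_pow_dvd_iff.mp (pow_dvd_pow_of_dvd (X_dvd_iff.mpr (by simpa using hf0)) m) n h

theorem natCast_mul_conv_succ (f : ℕ → ℝ) (m n : ℕ) :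
    n * conv f (m + 1) n = (m + 1) * ∑ k ∈ range (n + 1), k * f k * conv f m (n - k) := by
  rw [conv_eq_coeff_pow, natCast_mul_coeff_pow_succ, mul_comm (_ ^ m), coeff_mul,
    Nat.sum_antidiagonal_eq_sum_range_succ
      (fun i j ↦ coeff i (X * d⁄dX ℝ (mk f)) * coeff j (mk f ^ m))]
  simp [coeff_X_mul_derivative, conv_eq_coeff_pow]

theorem sum_mul_conv_eq_mul_conv_succ (f : ℕ → ℝ) (a b : ℝ) (m : ℕ) {n : ℕ} (hn : n ≠ 0) :
    ∑ k ∈ range (n + 1), (a + b * k / n) * f k * conv f m (n - k)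
      = (a + b / (m + 1)) * conv f (m + 1) n := by
  have hS :
      ∑ k ∈ range (n + 1), k * f k * conv f m (n - k) = n * conv f (m + 1) n / (m + 1) := by
    rw [eq_div_iff (by positivity), natCast_mul_conv_succ, mul_comm]
  calc ∑ k ∈ range (n + 1), (a + b * k / n) * f k * conv f m (n - k)
      = a * conv f (m + 1) n + b / n * ∑ k ∈ range (n + 1), k * f k * conv f m (n - k) := by
        rw [conv_succ, mul_sum, mul_sum, ← sum_add_distrib]
        exact sum_congr rfl fun k _ ↦ by ring
    _ = (a + b / (m + 1)) * conv f (m + 1) n := by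
        rw [hS]; field_simp

theorem tsum_conv_mul_eq_sum {f : ℕ → ℝ} (hf0 : f 0 = 0) (g : ℕ → ℝ) {n N : ℕ} (h : n < N) :
    ∑' m, conv f m n * g m = ∑ m ∈ range N, conv f m n * g m :=
  tsum_eq_sum fun m hm ↦ by
    rw [conv_eq_zero_of_lt hf0 (h.trans_le (by simpa using hm)), zero_mul]

theorem stmt17_general (f : ℕ → ℝ) (hf0 : f 0 = 0)
    (p : ℝ → ℕ → ℝ) (a b lam θ : ℝ)
    (hrec : ∀ θ' : ℝ, ∀ n : ℕ, 1 ≤ n → p θ' n = (a + b / n) * p (θ' + lam) (n - 1)) :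
    (∑' m : ℕ, conv f m 0 * p θ m) = p θ 0 ∧
      ∀ n : ℕ, 1 ≤ n →
        (∑' m : ℕ, conv f m n * p θ m)
          = ∑ k ∈ Finset.Icc 1 n, (a + b * k / n) * f k *
              ∑' m : ℕ, conv f m (n - k) * p (θ + lam) m := by
  refine ⟨by simp [tsum_conv_mul_eq_sum hf0 _ zero_lt_one, conv], fun n hn ↦ ?_⟩
  have hn0 : n ≠ 0 := by omega
  calc ∑' m, conv f m n * p θ m
      = ∑ m ∈ range n, conv f (m + 1) n * p θ (m + 1) := by
        rw [tsum_conv_mul_eq_sum hf0 _ n.lt_succ_self, sum_range_succ']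
        simp [conv, hn0]
    _ = ∑ m ∈ range n, ∑ k ∈ range (n + 1),
          (a + b * k / n) * f k * conv f m (n - k) * p (θ + lam) m := by
        refine sum_congr rfl fun m _ ↦ ?_
        rw [← sum_mul, sum_mul_conv_eq_mul_conv_succ f a b m hn0, hrec θ (m + 1) m.succ_pos]
        push_cast
        ring_nf
    _ = ∑ k ∈ range (n + 1),
          (a + b * k / n) * f k * ∑ m ∈ range n, conv f m (n - k) * p (θ + lam) m := by
        rw [sum_comm]
        simp_rw [mul_sum, mul_assoc]
    _ = ∑ k ∈ Icc 1 n,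
          (a + b * k / n) * f k * ∑ m ∈ range n, conv f m (n - k) * p (θ + lam) m := by
        rw [range_eq_Ico, sum_eq_sum_Ico_succ_bot n.succ_pos]
        simp [hf0, Ico_add_one_right_eq_Icc]
    _ = _ := sum_congr rfl fun k hk ↦ by
        rw [tsum_conv_mul_eq_sum hf0 _ (show n - k < n by simp at hk; omega)]

theorem stmt17 (f : ℕ → ℝ) (hf0 : f 0 = 0) (hfnn : ∀ n, 0 ≤ f n) (hfsum : ∑' n, f n = 1)
    (p : ℝ → ℕ → ℝ) (a b lam θ : ℝ)
    (hrec : ∀ θ' : ℝ, ∀ n : ℕ, 1 ≤ n → p θ' n = (a + b / n) * p (θ' + lam) (n - 1)) :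
    (∑' m : ℕ, conv f m 0 * p θ m) = p θ 0 ∧
      ∀ n : ℕ, 1 ≤ n →
        (∑' m : ℕ, conv f m n * p θ m)
          = ∑ k ∈ Finset.Icc 1 n, (a + b * k / n) * f k *
              ∑' m : ℕ, conv f m (n - k) * p (θ + lam) m :=
  stmt17_general f hf0 p a b lam θ hrec
end

section
/- For k ∈ ℤ, θ > 0, λ ∈ (0,1), and m ≥ 1, the moments of the distribution p_k(θ,λ;n) = S(k,θ,λ)^{-1}·(θ+λn)^{n+k-1}/n!·e^{-(θ+λn)} satisfy E[(X_k(θ,λ))^m] = (S(k+1,θ+λ,λ)/S(k,θ,λ)) · ∑_{ℓ=0}^{m-1} C(m-1,ℓ)·E[(X_{k+1}(θ+λ,λ))^ℓ], assuming all series converge absolutely. -/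
/-!
Writing `w n = (θ+λn)^{n+k-1}/n! · e^{-(θ+λn)}` for the weights of `X_k(θ,λ)`, one has
`(n+1) · w (n+1) = w' n`, where `w'` are the weights of `X_{k+1}(θ+λ,λ)`. Hence, after dropping
the vanishing term `n = 0` and shifting the index,
`∑ n^m w n = ∑ (n+1)^{m-1} w' n`, and the binomial expansion of `(n+1)^{m-1}` turns the right
side into unnormalized moments of `X_{k+1}(θ+λ,λ)`.
-/

/-- The normalizing constants `S(k,θ,λ)` of Consul and Jain. -/
noncomputable def consulJainS (k : ℤ) (θ lam : ℝ) : ℝ :=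
  ∑' n : ℕ, (θ + lam * n) ^ ((n : ℤ) + k - 1) / n.factorial * Real.exp (-(θ + lam * n))

/-- The `j`-th moment of the random variable `X_k(θ,λ)` with distribution
`p_k(θ,λ;n) = S(k,θ,λ)⁻¹ (θ+λn)^{n+k-1}/n! e^{-(θ+λn)}`. -/
noncomputable def momentX (j : ℕ) (k : ℤ) (θ lam : ℝ) : ℝ :=
  ∑' n : ℕ, (n : ℝ) ^ j * ((consulJainS k θ lam)⁻¹ *
    (θ + lam * n) ^ ((n : ℤ) + k - 1) / n.factorial * Real.exp (-(θ + lam * n)))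

noncomputable def consulJainWeight (k : ℤ) (θ lam : ℝ) (n : ℕ) : ℝ :=
  (θ + lam * n) ^ ((n : ℤ) + k - 1) / n.factorial * Real.exp (-(θ + lam * n))

lemma momentX_eq_inv_mul_tsum (j : ℕ) (k : ℤ) (θ lam : ℝ) :
    momentX j k θ lam
      = (consulJainS k θ lam)⁻¹ * ∑' n : ℕ, (n : ℝ) ^ j * consulJainWeight k θ lam n := by
  rw [momentX, ← tsum_mul_left]
  congr 1 with n
  rw [consulJainWeight]
  ring

lemma consulJainWeight_pos (k : ℤ) {θ lam : ℝ} (hθ : 0 < θ) (hlam : 0 ≤ lam) (n : ℕ) :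
    0 < consulJainWeight k θ lam n := by
  have : 0 < θ + lam * n := by positivity
  unfold consulJainWeight
  positivity

lemma consulJainS_pos (k : ℤ) {θ lam : ℝ} (hθ : 0 < θ) (hlam : 0 ≤ lam)
    (hs : Summable (consulJainWeight k θ lam)) : 0 < consulJainS k θ lam :=
  hs.tsum_pos (fun n => (consulJainWeight_pos k hθ hlam n).le) 0 (consulJainWeight_pos k hθ hlam 0)

lemma consulJainS_mul_momentX (j : ℕ) (k : ℤ) {θ lam : ℝ} (hS : consulJainS k θ lam ≠ 0) :
    consulJainS k θ lam * momentX j k θ lam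
      = ∑' n : ℕ, (n : ℝ) ^ j * consulJainWeight k θ lam n := by
  rw [momentX_eq_inv_mul_tsum, mul_inv_cancel_left₀ hS]

lemma consulJainWeight_succ_mul (k : ℤ) (θ lam : ℝ) (n : ℕ) :
    ((n : ℝ) + 1) * consulJainWeight k θ lam (n + 1)
      = consulJainWeight (k + 1) (θ + lam) lam n := by
  have hbase : θ + lam * ((n + 1 : ℕ) : ℝ) = θ + lam + lam * n := by push_cast; ring
  have hexp : ((n + 1 : ℕ) : ℤ) + k - 1 = (n : ℤ) + (k + 1) - 1 := by push_cast; ring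
  rw [consulJainWeight, consulJainWeight, hbase, hexp, Nat.factorial_succ]
  push_cast
  field_simp

lemma add_one_pow_eq_sum_choose {R : Type*} [CommSemiring R] (x : R) (n : ℕ) :
    (x + 1) ^ n = ∑ ℓ ∈ Finset.range (n + 1), (n.choose ℓ : R) * x ^ ℓ := by
  rw [add_pow]
  refine Finset.sum_congr rfl fun ℓ _ => ?_
  rw [one_pow, mul_one, mul_comm]

lemma tsum_pow_succ_mul_eq_sum_choose_tsum {f g : ℕ → ℝ}
    (hfg : ∀ n : ℕ, ((n : ℝ) + 1) * f (n + 1) = g n) (m : ℕ)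
    (hg : ∀ ℓ ≤ m, Summable fun n : ℕ => (n : ℝ) ^ ℓ * g n) :
    ∑' n : ℕ, (n : ℝ) ^ (m + 1) * f n
      = ∑ ℓ ∈ Finset.range (m + 1), (m.choose ℓ : ℝ) * ∑' n : ℕ, (n : ℝ) ^ ℓ * g n := by
  have hshift : ∀ n : ℕ, ((n + 1 : ℕ) : ℝ) ^ (m + 1) * f (n + 1)
      = ∑ ℓ ∈ Finset.range (m + 1), (m.choose ℓ : ℝ) * ((n : ℝ) ^ ℓ * g n) := by
    intro n
    rw [Nat.cast_succ, pow_succ, mul_assoc, hfg, add_one_pow_eq_sum_choose, Finset.sum_mul]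
    exact Finset.sum_congr rfl fun ℓ _ => mul_assoc _ _ _
  have hsum : ∀ ℓ ∈ Finset.range (m + 1),
      Summable fun n : ℕ => (m.choose ℓ : ℝ) * ((n : ℝ) ^ ℓ * g n) :=
    fun ℓ hℓ => (hg ℓ (Nat.lt_succ_iff.mp (Finset.mem_range.mp hℓ))).mul_left _
  have hshift_summable : Summable fun n : ℕ => ((n + 1 : ℕ) : ℝ) ^ (m + 1) * f (n + 1) := by
    simpa only [hshift] using summable_sum hsum
  rw [((summable_nat_add_iff 1).mp hshift_summable).tsum_eq_zero_add, Nat.cast_zero,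
    zero_pow m.succ_ne_zero, zero_mul, zero_add, tsum_congr hshift, Summable.tsum_finsetSum hsum]
  exact Finset.sum_congr rfl fun ℓ _ => tsum_mul_left

theorem stmt19_general (θ lam : ℝ) (hθ : 0 < θ) (hlam : lam ∈ Set.Ioo (0 : ℝ) 1) (k : ℤ)
    (m : ℕ) (hm : 1 ≤ m)
    (hs2 : ∀ j ≤ m, Summable fun n : ℕ => (n : ℝ) ^ j *
      (((θ + lam) + lam * n) ^ ((n : ℤ) + (k + 1) - 1) / n.factorial *
        Real.exp (-((θ + lam) + lam * n)))) :
    momentX m k θ lam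
    = consulJainS (k + 1) (θ + lam) lam / consulJainS k θ lam *
        ∑ ℓ ∈ Finset.range m, (Nat.choose (m - 1) ℓ : ℝ) * momentX ℓ (k + 1) (θ + lam) lam := by
  obtain ⟨p, rfl⟩ : ∃ p, m = p + 1 := ⟨m - 1, by omega⟩
  have hsummable : Summable (consulJainWeight (k + 1) (θ + lam) lam) :=
    (hs2 0 (by omega)).congr fun n => by rw [pow_zero, one_mul]; rfl
  have hS' : consulJainS (k + 1) (θ + lam) lam ≠ 0 :=
    (consulJainS_pos (k + 1) (add_pos hθ hlam.1) hlam.1.le hsummable).ne'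
  have hmoments := tsum_pow_succ_mul_eq_sum_choose_tsum (consulJainWeight_succ_mul k θ lam) p
    fun ℓ hℓ => hs2 ℓ (by omega)
  simp only [← consulJainS_mul_momentX _ _ hS'] at hmoments
  rw [momentX_eq_inv_mul_tsum, hmoments, Nat.add_sub_cancel, Finset.mul_sum, Finset.mul_sum]
  exact Finset.sum_congr rfl fun ℓ _ => by ring

theorem stmt19 (θ lam : ℝ) (hθ : 0 < θ) (hlam : lam ∈ Set.Ioo (0 : ℝ) 1) (k : ℤ)
    (m : ℕ) (hm : 1 ≤ m)
    (hs1 : ∀ j ≤ m, Summable fun n : ℕ => (n : ℝ) ^ j *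
      ((θ + lam * n) ^ ((n : ℤ) + k - 1) / n.factorial * Real.exp (-(θ + lam * n))))
    (hs2 : ∀ j ≤ m, Summable fun n : ℕ => (n : ℝ) ^ j *
      (((θ + lam) + lam * n) ^ ((n : ℤ) + (k + 1) - 1) / n.factorial *
        Real.exp (-((θ + lam) + lam * n)))) :
    momentX m k θ lam
    = consulJainS (k + 1) (θ + lam) lam / consulJainS k θ lam *
        ∑ ℓ ∈ Finset.range m, (Nat.choose (m - 1) ℓ : ℝ) * momentX ℓ (k + 1) (θ + lam) lam :=
  stmt19_general θ lam hθ hlam k m hm hs2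
end
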